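/- Let H be a Hilbert space and let A ⊆ H × H be a maximal dissipative operator, i.e. A is a dissipative relation with mul A = {0}, and whenever B ⊆ H × H is a dissipative relation with mul B = {0} and A ⊆ B, then A = B. Then the closure of A in H × H is an m-dissipative relation. -/

import Mathlib

open Filter Topology

/-- A relation `A ⊆ H × H` is dissipative if `‖lx‖ ≤ ‖lx - y‖` for all `(x,y) ∈ A`
and all real `l > 0`. -/
def Dissipative {𝕜 H : Type*} [RCLike 𝕜] [NormedAddCommGroup H] [InnerProductSpace 𝕜 H]
    (A : Submodule 𝕜 (H × H)) : Prop :=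
  ∀ p ∈ A, ∀ l : ℝ, 0 < l → ‖(l : 𝕜) • p.1‖ ≤ ‖(l : 𝕜) • p.1 - p.2‖

/-!
Dissipativity of `A` means `re ⟪x, y⟫ ≤ 0` on `A`, a closed condition, so it passes to the
closure `Ā`. For a closed dissipative relation, `‖p‖ ≤ 2 ‖p.1 - p.2‖`, so `ran (1 - Ā)` is
closed. If `z ⊥ ran (1 - A)`, then adjoining `(z, -z)` to `A` gives a dissipative operator,
since the cross terms of `re ⟪a.1 + c z, a.2 - c z⟫` cancel; by maximality `(z, -z) ∈ A`, whence
`⟪2 z, z⟫ = 0`. Thus `ran (1 - Ā)` is closed and dense, i.e. all of `H`.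
-/

section

open RCLike
open scoped InnerProductSpace

variable {𝕜 H : Type*} [RCLike 𝕜] [NormedAddCommGroup H] [InnerProductSpace 𝕜 H]

theorem norm_smul_le_norm_smul_sub_iff (l : ℝ) (x y : H) :
    ‖(l : 𝕜) • x‖ ≤ ‖(l : 𝕜) • x - y‖ ↔ 2 * l * re ⟪x, y⟫_𝕜 ≤ ‖y‖ ^ 2 := by
  rw [← sq_le_sq₀ (norm_nonneg _) (norm_nonneg _), norm_sub_sq (𝕜 := 𝕜), inner_smul_left,
    conj_ofReal, re_ofReal_mul]
  constructor <;> intro h <;> linarith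

theorem dissipative_iff_re_inner_nonpos {A : Submodule 𝕜 (H × H)} :
    Dissipative A ↔ ∀ p ∈ A, re ⟪p.1, p.2⟫_𝕜 ≤ 0 := by
  refine ⟨fun h p hp => ?_, fun h p hp l hl => ?_⟩
  · by_contra! hpos
    set l := (‖p.2‖ ^ 2 + 1) / (2 * re ⟪p.1, p.2⟫_𝕜)
    have hl : 0 < l := by positivity
    have hlre : 2 * l * re ⟪p.1, p.2⟫_𝕜 = ‖p.2‖ ^ 2 + 1 := by
      simp only [l]
      field_simp
    have := (norm_smul_le_norm_smul_sub_iff l p.1 p.2).1 (h p hp l hl)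
    linarith
  · rw [norm_smul_le_norm_smul_sub_iff l]
    nlinarith [h p hp, sq_nonneg ‖p.2‖]

theorem Dissipative.topologicalClosure {A : Submodule 𝕜 (H × H)} (hA : Dissipative A) :
    Dissipative A.topologicalClosure := by
  rw [dissipative_iff_re_inner_nonpos] at hA ⊢
  have hclosed : IsClosed {p : H × H | re ⟪p.1, p.2⟫_𝕜 ≤ 0} :=
    isClosed_le (continuous_re.comp (continuous_fst.inner continuous_snd)) continuous_const
  intro p hp
  rw [← SetLike.mem_coe, Submodule.topologicalClosure_coe] at hp
  exact closure_minimal hA hclosed hp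

theorem Dissipative.norm_le_two_mul_norm_sub {A : Submodule 𝕜 (H × H)} (hA : Dissipative A)
    {p : H × H} (hp : p ∈ A) : ‖p‖ ≤ 2 * ‖p.1 - p.2‖ := by
  have h1 : ‖p.1‖ ≤ ‖p.1 - p.2‖ := by simpa using hA p hp 1 one_pos
  have h2 : ‖p.2‖ ≤ ‖p.1‖ + ‖p.1 - p.2‖ := by
    simpa using norm_sub_le p.1 (p.1 - p.2)
  rw [Prod.norm_def, max_le_iff]
  constructor <;> linarith [norm_nonneg (p.1 - p.2)]

theorem Dissipative.isClosed_map_fst_sub_snd [CompleteSpace H] {C : Submodule 𝕜 (H × H)}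
    (hC : Dissipative C) (hcl : IsClosed (C : Set (H × H))) :
    IsClosed (C.map (LinearMap.fst 𝕜 H H - LinearMap.snd 𝕜 H H) : Set H) := by
  have : CompleteSpace C := hcl.completeSpace_coe
  let g : C →L[𝕜] H := (ContinuousLinearMap.fst 𝕜 H H - ContinuousLinearMap.snd 𝕜 H H).comp
    C.subtypeL
  have hrange : Set.range g = C.map (LinearMap.fst 𝕜 H H - LinearMap.snd 𝕜 H H) := by
    ext v
    simp [g]
  have hanti : AntilipschitzWith 2 g :=
    g.antilipschitz_of_bound fun q => by
      simpa [g] using hC.norm_le_two_mul_norm_sub q.2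
  exact hrange ▸ hanti.isClosed_range g.uniformContinuous

theorem re_inner_add_sub_of_re_inner_eq {x y w : H} (h : re ⟪x, w⟫_𝕜 = re ⟪y, w⟫_𝕜) :
    re ⟪x + w, y - w⟫_𝕜 = re ⟪x, y⟫_𝕜 - ‖w‖ ^ 2 := by
  simp only [inner_add_left, inner_sub_right, map_add, map_sub]
  rw [inner_re_symm w y, inner_self_eq_norm_sq]
  linarith

theorem eq_zero_of_inner_fst_sub_snd_eq_zero {A : Submodule 𝕜 (H × H)} (hA : Dissipative A)
    (hop : ∀ y : H, ((0 : H), y) ∈ A → y = 0)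
    (hmax : ∀ B : Submodule 𝕜 (H × H),
        Dissipative B → (∀ y : H, ((0 : H), y) ∈ B → y = 0) → A ≤ B → A = B)
    {z : H} (hz : ∀ p ∈ A, ⟪p.1 - p.2, z⟫_𝕜 = 0) : z = 0 := by
  rw [dissipative_iff_re_inner_nonpos] at hA
  have hre : ∀ a ∈ A, ∀ c : 𝕜,
      re ⟪a.1 + c • z, a.2 - c • z⟫_𝕜 = re ⟪a.1, a.2⟫_𝕜 - ‖c • z‖ ^ 2 := by
    intro a ha c
    refine re_inner_add_sub_of_re_inner_eq (congrArg re (sub_eq_zero.1 ?_))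
    rw [← inner_sub_left, inner_smul_right, hz a ha, mul_zero]
  set B := A ⊔ Submodule.span 𝕜 {((z, -z) : H × H)}
  have hB : ∀ p ∈ B, ∃ a ∈ A, ∃ c : 𝕜, p = (a.1 + c • z, a.2 - c • z) := by
    intro p hp
    obtain ⟨a, ha, b, hb, rfl⟩ := Submodule.mem_sup.1 hp
    obtain ⟨c, rfl⟩ := Submodule.mem_span_singleton.1 hb
    exact ⟨a, ha, c, Prod.ext rfl (by simp [sub_eq_add_neg])⟩
  have hBdiss : Dissipative B := by
    rw [dissipative_iff_re_inner_nonpos]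
    intro p hp
    obtain ⟨a, ha, c, rfl⟩ := hB p hp
    rw [hre a ha c]
    linarith [hA a ha, sq_nonneg ‖c • z‖]
  have hBop : ∀ y : H, ((0 : H), y) ∈ B → y = 0 := by
    intro y hy
    obtain ⟨a, ha, c, hp⟩ := hB _ hy
    obtain ⟨h1, rfl⟩ := Prod.mk.inj hp
    have hcz : c • z = 0 := by
      have := hre a ha c
      rw [← h1, inner_zero_left, map_zero] at this
      have : ‖c • z‖ ^ 2 = 0 := by linarith [hA a ha, sq_nonneg ‖c • z‖]
      simpa using this
    rw [hcz, add_zero] at h1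
    rw [hcz, sub_zero]
    exact hop a.2 (by rw [h1]; exact ha)
  have hzA : ((z, -z) : H × H) ∈ A :=
    (hmax B hBdiss hBop le_sup_left).symm ▸
      Submodule.mem_sup_right (Submodule.mem_span_singleton_self _)
  have h2z := hz _ hzA
  rw [sub_neg_eq_add, inner_add_left, ← two_mul, mul_eq_zero] at h2z
  exact h2z.resolve_left two_ne_zero |> inner_self_eq_zero.1

end

/-- If `A` is a maximal dissipative operator on a Hilbert space `H` (a dissipative relation
with `mul A = {0}` which has no proper extension among dissipative operators), then the
closure of `A` in `H × H` is an m-dissipative relation. -/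
theorem stmt_15 {𝕜 H : Type*} [RCLike 𝕜] [NormedAddCommGroup H] [InnerProductSpace 𝕜 H]
    [CompleteSpace H] (A : Submodule 𝕜 (H × H))
    (hdiss : Dissipative A)
    (hop : ∀ y : H, ((0 : H), y) ∈ A → y = 0)
    (hmax : ∀ B : Submodule 𝕜 (H × H),
        Dissipative B → (∀ y : H, ((0 : H), y) ∈ B → y = 0) → A ≤ B → A = B) :
    Dissipative A.topologicalClosure ∧
      ∃ l : ℝ, 0 < l ∧ ∀ v : H, ∃ p ∈ A.topologicalClosure, v = (l : 𝕜) • p.1 - p.2 := by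
  set K := A.topologicalClosure.map (LinearMap.fst 𝕜 H H - LinearMap.snd 𝕜 H H)
  have hKclosed : IsClosed (K : Set H) :=
    hdiss.topologicalClosure.isClosed_map_fst_sub_snd A.isClosed_topologicalClosure
  have : CompleteSpace K := hKclosed.completeSpace_coe
  have hK : K = ⊤ := by
    rw [← Submodule.orthogonal_eq_bot_iff, Submodule.eq_bot_iff]
    intro z hz
    refine eq_zero_of_inner_fst_sub_snd_eq_zero hdiss hop hmax fun p hp => ?_
    exact (Submodule.mem_orthogonal K z).1 hz _
      (Submodule.mem_map_of_mem (A.le_topologicalClosure hp))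
  refine ⟨hdiss.topologicalClosure, 1, one_pos, fun v => ?_⟩
  obtain ⟨p, hp, hpv⟩ := Submodule.mem_map.1 (hK ▸ Submodule.mem_top : v ∈ K)
  exact ⟨p, hp, by simpa using hpv.symm⟩
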